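/- The infinite series sum over k ≥ 1 of (415k^2 - 343k + 62) / (k(3k-1)(3k-2) * (-8)^k * binomial(4k, k)) converges to -3 log 2. -/

import Mathlib

open intervalIntegral MeasureTheory


open intervalIntegral MeasureTheory

lemma beta_nat (a b : ℕ) : ∫ x in (0:ℝ)..1, x^a * (1-x)^b
    = (a.factorial * b.factorial : ℝ) / (a+b+1).factorial := by
  induction b generalizing a with
  | zero =>
    simp only [pow_zero, mul_one, integral_pow, Nat.factorial_zero, Nat.cast_one, mul_one,
        Nat.add_zero]
    rw [Nat.factorial_succ]
    have : ((a:ℝ)+1) ≠ 0 := by positivity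
    push_cast
    field_simp
    simp
  | succ b ih =>
    have key : ∫ x in (0:ℝ)..1, (((a:ℝ)+1) * (x^a * (1-x)^(b+1)) - ((b:ℝ)+1) * (x^(a+1) * (1-x)^b)) = 0 := by
      have : ∀ x ∈ Set.uIcc (0:ℝ) 1, HasDerivAt (fun y : ℝ => y^(a+1) * (1-y)^(b+1))
          (((a:ℝ)+1) * (x^a * (1-x)^(b+1)) - ((b:ℝ)+1) * (x^(a+1) * (1-x)^b)) x := by
        intro x _
        have h1 : HasDerivAt (fun y : ℝ => y^(a+1)) (((a:ℝ)+1) * x^a) x := by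
          simpa using hasDerivAt_pow (a+1) x
        have h2 : HasDerivAt (fun y : ℝ => (1-y)^(b+1)) (-(((b:ℝ)+1) * (1-x)^b)) x := by
          have hin : HasDerivAt (fun y : ℝ => 1 - y) (-1) x := by
            simpa using (hasDerivAt_id x).const_sub 1
          have := (hasDerivAt_pow (b+1) (1-x)).comp x hin
          simpa [Function.comp_def] using this.neg.neg
        have := h1.mul h2
        refine this.congr_deriv ?_
        push_cast
        ring
      have hcont : IntervalIntegrable (fun x : ℝ => (((a:ℝ)+1) * (x^a * (1-x)^(b+1)) - ((b:ℝ)+1) * (x^(a+1) * (1-x)^b))) volume 0 1 := by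
        apply Continuous.intervalIntegrable
        continuity
      rw [integral_eq_sub_of_hasDerivAt this hcont]
      simp
    rw [intervalIntegral.integral_sub, intervalIntegral.integral_const_mul,
        intervalIntegral.integral_const_mul, sub_eq_zero] at key
    · have ha : ((a:ℝ)+1) ≠ 0 := by positivity
      have := ih (a+1)
      rw [this] at key
      have hkey : (∫ x in (0:ℝ)..1, x ^ a * (1 - x) ^ (b + 1))
          = ((b:ℝ)+1) * (((a+1).factorial * b.factorial : ℝ) / (a+1+b+1).factorial) / ((a:ℝ)+1) := by
        field_simp at key ⊢
        linarith [key]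
      rw [hkey]
      have h1 : ((a+1).factorial : ℝ) = ((a:ℝ)+1) * a.factorial := by
        rw [Nat.factorial_succ]; push_cast; ring
      have h2 : ((b+1).factorial : ℝ) = ((b:ℝ)+1) * b.factorial := by
        rw [Nat.factorial_succ]; push_cast; ring
      have h3 : (a+1+b+1) = (a+(b+1)+1) := by omega
      rw [h1, h2, h3]
      have hf : ((a+(b+1)+1).factorial : ℝ) ≠ 0 := by positivity
      field_simp
    · exact (by continuity : Continuous fun x : ℝ => ((a:ℝ)+1) * (x^a * (1-x)^(b+1))).intervalIntegrable _ _
    · exact (by continuity : Continuous fun x : ℝ => ((b:ℝ)+1) * (x^(a+1) * (1-x)^b)).intervalIntegrable _ _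

set_option maxHeartbeats 1000000 in
lemma term_eq (n : ℕ) :
    (415*((n:ℝ)+1)^2 - 343*((n:ℝ)+1) + 62) /
        (((n:ℝ)+1)*(3*((n:ℝ)+1)-1)*(3*((n:ℝ)+1)-2) * (-8)^(n+1) * (Nat.choose (4*(n+1)) (n+1) : ℝ))
    = ∫ x in (0:ℝ)..1, ((-8:ℝ)^(n+1))⁻¹ *
        (31 * (x^(3*n+3) * (1-x)^n) + 18 * (x^(3*n+1) * (1-x)^(n+1)) + 12 * (x^(3*n) * (1-x)^(n+1))) := by
  have i1 : IntervalIntegrable (fun x : ℝ => (31:ℝ) * (x^(3*n+3) * (1-x)^n)) volume 0 1 := by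
    apply Continuous.intervalIntegrable; continuity
  have i2 : IntervalIntegrable (fun x : ℝ => (18:ℝ) * (x^(3*n+1) * (1-x)^(n+1))) volume 0 1 := by
    apply Continuous.intervalIntegrable; continuity
  have i3 : IntervalIntegrable (fun x : ℝ => (12:ℝ) * (x^(3*n) * (1-x)^(n+1))) volume 0 1 := by
    apply Continuous.intervalIntegrable; continuity
  rw [intervalIntegral.integral_const_mul, intervalIntegral.integral_add (i1.add i2) i3,
      intervalIntegral.integral_add i1 i2, intervalIntegral.integral_const_mul,
      intervalIntegral.integral_const_mul, intervalIntegral.integral_const_mul,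
      beta_nat, beta_nat, beta_nat]
  have e1 : 3*n+3+n+1 = 4*n+4 := by ring
  have e2 : 3*n+1+(n+1)+1 = 4*n+3 := by ring
  have e3 : 3*n+(n+1)+1 = 4*n+2 := by ring
  rw [e1, e2, e3]
  have h43 : ((4*n+3).factorial : ℝ) = (4*(n:ℝ)+3) * (4*n+2).factorial := by
    rw [show 4*n+3 = (4*n+2)+1 by ring, Nat.factorial_succ]; push_cast; ring
  have h44 : ((4*n+4).factorial : ℝ) = (4*(n:ℝ)+4) * ((4*(n:ℝ)+3) * (4*n+2).factorial) := by
    rw [show 4*n+4 = (4*n+3)+1 by ring, Nat.factorial_succ, Nat.cast_mul, h43]; push_cast; ring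
  have h31 : ((3*n+1).factorial : ℝ) = (3*(n:ℝ)+1) * (3*n).factorial := by
    rw [show 3*n+1 = (3*n)+1 by ring, Nat.factorial_succ]; push_cast; ring
  have h32 : ((3*n+2).factorial : ℝ) = (3*(n:ℝ)+2) * ((3*(n:ℝ)+1) * (3*n).factorial) := by
    rw [show 3*n+2 = (3*n+1)+1 by ring, Nat.factorial_succ, Nat.cast_mul, h31]; push_cast; ring
  have h33 : ((3*n+3).factorial : ℝ) = (3*(n:ℝ)+3) * ((3*(n:ℝ)+2) * ((3*(n:ℝ)+1) * (3*n).factorial)) := by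
    rw [show 3*n+3 = (3*n+2)+1 by ring, Nat.factorial_succ, Nat.cast_mul, h32]; push_cast; ring
  have hn1 : ((n+1).factorial : ℝ) = ((n:ℝ)+1) * n.factorial := by
    rw [Nat.factorial_succ]; push_cast; ring
  have hchoose : (Nat.choose (4*(n+1)) (n+1) : ℝ) * (((n+1).factorial : ℝ) * ((3*n+3).factorial : ℝ))
      = ((4*n+4).factorial : ℝ) := by
    have h := Nat.choose_mul_factorial_mul_factorial (show n+1 ≤ 4*(n+1) by omega)
    have h2 : 4*(n+1) - (n+1) = 3*n+3 := by omega
    rw [h2, show 4*(n+1) = 4*n+4 by ring] at h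
    have h3 := congrArg (fun m : ℕ => (m : ℝ)) h
    push_cast at h3
    rw [show 4*(n+1) = 4*n+4 by ring]
    rw [← mul_assoc]
    exact h3
  have hA : (0:ℝ) < (3*n).factorial := by positivity
  have hB : (0:ℝ) < n.factorial := by positivity
  have hD : (0:ℝ) < (4*n+2).factorial := by positivity
  have hC : (Nat.choose (4*(n+1)) (n+1) : ℝ)
      = ((4*(n:ℝ)+4) * ((4*(n:ℝ)+3) * (4*n+2).factorial)) /
        ((((n:ℝ)+1) * n.factorial) * ((3*(n:ℝ)+3) * ((3*(n:ℝ)+2) * ((3*(n:ℝ)+1) * (3*n).factorial)))) := by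
    rw [eq_div_iff (by positivity)]
    rw [← hn1, ← h33, hchoose, h44]
  have hu : ((-8:ℝ))^(n+1) ≠ 0 := pow_ne_zero _ (by norm_num)
  have hCpos : (0:ℝ) < (Nat.choose (4*(n+1)) (n+1) : ℝ) := by
    exact_mod_cast Nat.choose_pos (show n+1 ≤ 4*(n+1) by omega)
  have hx1 : ((n:ℝ)+1) ≠ 0 := by positivity
  have hx2 : (3*(n:ℝ)+1) ≠ 0 := by positivity
  have hx3 : (3*(n:ℝ)+2) ≠ 0 := by positivity
  have hx4 : (3*(n:ℝ)+3) ≠ 0 := by positivity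
  have hx5 : (4*(n:ℝ)+3) ≠ 0 := by positivity
  have hx6 : (4*(n:ℝ)+4) ≠ 0 := by positivity
  rw [div_eq_iff (by
    apply mul_ne_zero
    apply mul_ne_zero
    · apply mul_ne_zero
      apply mul_ne_zero
      · exact hx1
      · intro h; apply hx3; linarith
      · intro h; apply hx2; linarith
    · exact hu
    · exact ne_of_gt hCpos)]
  rw [hC, h44, h43, h33, h31, hn1]
  field_simp
  ring

noncomputable def Gfun : ℝ → ℝ := fun t => -((31*t^3 - 18*t^2 + 6*t + 12)/(8 + t^3 - t^4))

lemma hden (t : ℝ) (h0 : 0 ≤ t) (h1 : t ≤ 1) : (0:ℝ) < 8 + t^3 - t^4 := by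
  nlinarith [pow_le_one₀ h0 h1 (n := 3), pow_nonneg h0 3]

lemma hasSum_pointwise (t : ℝ) (ht : t ∈ Set.Ioo (0:ℝ) 1) :
    HasSum (fun n : ℕ => ((-8:ℝ)^(n+1))⁻¹ *
      (31 * (t^(3*n+3) * (1-t)^n) + 18 * (t^(3*n+1) * (1-t)^(n+1)) + 12 * (t^(3*n) * (1-t)^(n+1))))
      (Gfun t) := by
  obtain ⟨ht0, ht1⟩ := ht
  have ht0' : t ≠ 0 := ne_of_gt ht0
  have ht1' : (1:ℝ) - t ≠ 0 := by intro h; apply absurd ht1; push_neg; linarith [h]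
  have ht1'' : (0:ℝ) < 1 - t := by linarith
  set x : ℝ := -(t^3*(1-t))/8 with hx
  have hxabs : ‖x‖ < 1 := by
    rw [Real.norm_eq_abs, hx]
    rw [abs_div, abs_neg]
    have h1 : |t^3*(1-t)| ≤ 1 := by
      rw [abs_mul, abs_of_nonneg (by positivity : (0:ℝ) ≤ t^3), abs_of_nonneg ht1''.le]
      nlinarith [pow_le_one₀ ht0.le ht1.le (n := 3), pow_nonneg ht0.le 3]
    rw [abs_of_nonneg (by norm_num : (0:ℝ) ≤ (8:ℝ))]
    linarith
  set A : ℝ := 31/(1-t) + 18/t^2 + 12/t^3 with hA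
  have hgeo := (hasSum_geometric_of_norm_lt_one hxabs).mul_left (A*x)
  have hfun : ∀ n : ℕ, ((-8:ℝ)^(n+1))⁻¹ *
      (31 * (t^(3*n+3) * (1-t)^n) + 18 * (t^(3*n+1) * (1-t)^(n+1)) + 12 * (t^(3*n) * (1-t)^(n+1)))
      = A*x*x^n := by
    intro n
    have hxp : x^(n+1) = (t^3*(1-t))^(n+1) / (-8:ℝ)^(n+1) := by
      rw [hx, show -(t^3*(1-t))/8 = (t^3*(1-t))/(-8) by ring, div_pow]
    have hu : ((-8:ℝ))^(n+1) ≠ 0 := pow_ne_zero _ (by norm_num)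
    rw [show A*x*x^n = A*x^(n+1) by rw [pow_succ]; ring, hxp,
       show (t^3*(1-t))^(n+1) = t^(3*(n+1))*(1-t)^(n+1) by rw [mul_pow, ← pow_mul], hA]
    field_simp
    ring
  have hval : A*x*(1-x)⁻¹ = Gfun t := by
    have hdpos := hden t ht0.le ht1.le
    have h1x : (1:ℝ) - x = (8 + t^3 - t^4)/8 := by rw [hx]; field_simp; ring
    rw [h1x, Gfun, hA, hx]
    field_simp
    ring
  rw [← hval]
  simp_rw [hfun]
  exact hgeo

lemma Gcont : ContinuousOn Gfun (Set.uIcc (0:ℝ) 1) := by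
  apply ContinuousOn.neg
  apply ContinuousOn.div
  · fun_prop
  · fun_prop
  · intro t ht
    rw [Set.uIcc_of_le (by norm_num : (0:ℝ) ≤ 1)] at ht
    exact ne_of_gt (hden t ht.1 ht.2)

lemma integral_G : ∫ t in (0:ℝ)..1, Gfun t = -3 * Real.log 2 := by
  have hderiv : ∀ t ∈ Set.uIcc (0:ℝ) 1,
      HasDerivAt (fun y : ℝ => 10 * Real.log (2-y) + 7 * Real.log (y^3+y^2+2*y+4)) (Gfun t) t := by
    intro t ht
    rw [Set.uIcc_of_le (by norm_num : (0:ℝ) ≤ 1)] at ht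
    obtain ⟨h0, h1⟩ := ht
    have h2t : (2:ℝ) - t ≠ 0 := by intro h; nlinarith [h]
    have hcub : (0:ℝ) < t^3+t^2+2*t+4 := by positivity
    have d1 : HasDerivAt (fun y : ℝ => 2 - y) (-1) t := by
      simpa using (hasDerivAt_id t).const_sub 2
    have d2 : HasDerivAt (fun y : ℝ => Real.log (2-y)) (-1/(2-t)) t := by
      have := (Real.hasDerivAt_log h2t).comp t d1
      simpa [div_eq_inv_mul, Function.comp_def] using this
    have d3 : HasDerivAt (fun y : ℝ => y^3+y^2+2*y+4) (3*t^2+2*t+2) t := by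
      have p3 : HasDerivAt (fun y : ℝ => y^3) (3*t^2) t := by simpa using hasDerivAt_pow 3 t
      have p2 : HasDerivAt (fun y : ℝ => y^2) (2*t) t := by simpa using hasDerivAt_pow 2 t
      have p1 : HasDerivAt (fun y : ℝ => 2*y) (2:ℝ) t := by
        simpa using (hasDerivAt_id t).const_mul 2
      simpa using ((p3.add p2).add p1).add_const 4
    have d4 : HasDerivAt (fun y : ℝ => Real.log (y^3+y^2+2*y+4)) ((3*t^2+2*t+2)/(t^3+t^2+2*t+4)) t := by
      have := (Real.hasDerivAt_log (ne_of_gt hcub)).comp t d3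
      simpa [div_eq_inv_mul, mul_comm, Function.comp_def] using this
    have := (d2.const_mul 10).add (d4.const_mul 7)
    refine this.congr_deriv ?_
    have hq := hden t h0 h1
    have hfact : (2 - t) * (t^3+t^2+2*t+4) = 8 + t^3 - t^4 := by ring
    rw [Gfun]
    field_simp
    ring
  rw [integral_eq_sub_of_hasDerivAt hderiv (Gcont.intervalIntegrable)]
  have l8 : Real.log 8 = 3 * Real.log 2 := by
    rw [show (8:ℝ) = 2^3 by norm_num, Real.log_pow]; push_cast; ring
  have l4 : Real.log 4 = 2 * Real.log 2 := by
    rw [show (4:ℝ) = 2^2 by norm_num, Real.log_pow]; push_cast; ring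
  norm_num [l8, l4, Real.log_one]
  ring

noncomputable def Ffun : ℕ → ℝ → ℝ := fun n t => ((-8:ℝ)^(n+1))⁻¹ *
    (31 * (t^(3*n+3) * (1-t)^n) + 18 * (t^(3*n+1) * (1-t)^(n+1)) + 12 * (t^(3*n) * (1-t)^(n+1)))

lemma hasSum_pointwise' (t : ℝ) (ht : t ∈ Set.Ioo (0:ℝ) 1) :
    HasSum (fun n : ℕ => Ffun n t) (Gfun t) := by
  simp only [Ffun]
  exact hasSum_pointwise t ht

lemma main_hasSum : HasSum (fun n : ℕ => ∫ t in (0:ℝ)..1, Ffun n t) (-3 * Real.log 2) := by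
  rw [← integral_G]
  apply intervalIntegral.hasSum_integral_of_dominated_convergence
    (bound := fun n _ => (61:ℝ) * (1/8)^n)
  · intro n
    apply Continuous.aestronglyMeasurable
    unfold Ffun
    fun_prop
  · intro n
    filter_upwards with t ht
    rw [Set.uIoc_of_le (by norm_num : (0:ℝ) ≤ 1)] at ht
    obtain ⟨ht0, ht1⟩ := ht
    have h1t : (0:ℝ) ≤ 1 - t := by linarith
    have hp : ∀ a b : ℕ, t^a * (1-t)^b ≤ 1 := by
      intro a b
      calc t^a * (1-t)^b ≤ 1 * 1 := by
            apply mul_le_mul (pow_le_one₀ ht0.le ht1) (pow_le_one₀ h1t (by linarith))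
              (by positivity) (by norm_num)
        _ = 1 := by norm_num
    have hP0 : (0:ℝ) ≤ 31 * (t^(3*n+3) * (1-t)^n) + 18 * (t^(3*n+1) * (1-t)^(n+1)) + 12 * (t^(3*n) * (1-t)^(n+1)) := by
      positivity
    have hP : 31 * (t^(3*n+3) * (1-t)^n) + 18 * (t^(3*n+1) * (1-t)^(n+1)) + 12 * (t^(3*n) * (1-t)^(n+1)) ≤ 61 := by
      have := hp (3*n+3) n
      have := hp (3*n+1) (n+1)
      have := hp (3*n) (n+1)
      linarith
    rw [Ffun, Real.norm_eq_abs, abs_mul, abs_inv, abs_pow, abs_neg,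
        abs_of_nonneg (by norm_num : (0:ℝ) ≤ 8), abs_of_nonneg hP0]
    have h8 : ((8:ℝ)^(n+1))⁻¹ ≤ (1/8)^n := by
      rw [one_div, inv_pow]
      exact inv_anti₀ (by positivity) (pow_le_pow_right₀ (by norm_num) (by omega))
    calc ((8:ℝ)^(n+1))⁻¹ * (31 * (t^(3*n+3) * (1-t)^n) + 18 * (t^(3*n+1) * (1-t)^(n+1)) + 12 * (t^(3*n) * (1-t)^(n+1)))
        ≤ (1/8)^n * 61 := by
          apply mul_le_mul h8 hP hP0 (by positivity)
      _ = 61 * (1/8)^n := by ring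
  · filter_upwards with t _
    exact (summable_geometric_of_lt_one (by norm_num) (by norm_num)).mul_left 61
  · exact intervalIntegrable_const
  · have hne : ∀ᵐ (t:ℝ), t ≠ 1 := by
      rw [MeasureTheory.ae_iff]
      have : {a : ℝ | ¬ a ≠ 1} = {1} := by ext a; simp
      rw [this]
      exact measure_singleton 1
    filter_upwards [hne] with t ht1 ht
    rw [Set.uIoc_of_le (by norm_num : (0:ℝ) ≤ 1)] at ht
    exact hasSum_pointwise' t ⟨ht.1, lt_of_le_of_ne ht.2 ht1⟩


theorem stmt_19 :
    HasSum (fun n : ℕ =>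
      (415*((n:ℝ)+1)^2 - 343*((n:ℝ)+1) + 62) /
        (((n:ℝ)+1)*(3*((n:ℝ)+1)-1)*(3*((n:ℝ)+1)-2) * (-8)^(n+1) * (Nat.choose (4*(n+1)) (n+1) : ℝ)))
      (-3*Real.log 2) := by
  have hfn : (fun n : ℕ =>
      (415*((n:ℝ)+1)^2 - 343*((n:ℝ)+1) + 62) /
        (((n:ℝ)+1)*(3*((n:ℝ)+1)-1)*(3*((n:ℝ)+1)-2) * (-8)^(n+1) * (Nat.choose (4*(n+1)) (n+1) : ℝ)))
      = (fun n : ℕ => ∫ t in (0:ℝ)..1, Ffun n t) := by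
    funext n
    rw [term_eq n]
    simp only [Ffun]
  rw [hfn, show (-3*Real.log 2) = -3 * Real.log 2 from rfl]
  exact main_hasSum
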